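/- arXiv:2603.22155 — 2 statements merged into one kernel-verified Lean document; each statement's English description precedes it below -/
import Mathlib

section
/- Let f : ℝⁿ × ℝᵐ → ℝ be continuously differentiable, convex in x and concave in z, with F(x,z) = (∇ₓf(x,z), −∇_z f(x,z)) L-Lipschitz continuous on ℝ^{n+m}, and let 0 < η ≤ (√3 − 1)/(2L). Fix θ_t, θ = (x,z) ∈ ℝ^{n+m} and u ∈ [0,1], and set y = θ_t − 2η·u·F(θ_t) = (x_y, z_y), ỹ = θ_t − 2η·(1−u)·F(θ_t) = (x_ỹ, z_ỹ), θ₊ = θ_t − (η/2)(F(y) + F(ỹ)). Then η·[ f(x_y, z) − f(x, z_y) + f(x_ỹ, z) − f(x, z_ỹ) ] ≤ ‖θ_t − θ‖² − ‖θ₊ − θ‖². -/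
open scoped RealInnerProductSpace

section Aux

/-- First-order condition for convexity with gradients. -/
theorem convexOn_grad_le {E : Type*} [NormedAddCommGroup E] [InnerProductSpace ℝ E]
    [CompleteSpace E]
    {g : E → ℝ} (hg : ConvexOn ℝ Set.univ g) {x G : E}
    (hd : HasGradientAt g G x) (y : E) :
    ⟪G, y - x⟫ ≤ g y - g x := by
  set φ : ℝ → ℝ := fun t => g (x + t • (y - x)) with hφ
  have hcurve : HasDerivAt (fun t : ℝ => x + t • (y - x)) (y - x) 0 := by
    simpa using ((hasDerivAt_id (0:ℝ)).smul_const (y - x)).const_add x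
  have hline : HasDerivAt φ ⟪G, y - x⟫ 0 := by
    have h1 : HasFDerivAt g (InnerProductSpace.toDual ℝ E G) x := hd.hasFDerivAt
    have h2 : HasFDerivAt g (InnerProductSpace.toDual ℝ E G) (x + (0:ℝ) • (y - x)) := by
      simpa using h1
    have := h2.comp_hasDerivAt (0:ℝ) hcurve
    simpa [InnerProductSpace.toDual_apply_apply, real_inner_comm, Function.comp_def] using this
  have htend : Filter.Tendsto (slope φ 0) (nhdsWithin 0 (Set.Ioi 0)) (nhds ⟪G, y - x⟫) := by
    refine (hasDerivAt_iff_tendsto_slope.1 hline).mono_left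
      (nhdsWithin_mono 0 ?_)
    intro t ht
    exact ne_of_gt ht
  have hev : ∀ᶠ t in nhdsWithin 0 (Set.Ioi 0), slope φ 0 t ≤ g y - g x := by
    filter_upwards [Ioc_mem_nhdsGT_of_mem (Set.left_mem_Ico.2 one_pos)] with t ht
    have ht0 : 0 < t := ht.1
    have ht1 : t ≤ 1 := ht.2
    have hpt : x + t • (y - x) = (1 - t) • x + t • y := by module
    have hcvx : φ t ≤ (1 - t) * g x + t * g y := by
      rw [hφ]
      simp only
      rw [hpt]
      exact hg.2 (Set.mem_univ x) (Set.mem_univ y) (by linarith) ht0.le (by ring)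
    have hφ0 : φ 0 = g x := by simp [hφ]
    have hs : slope φ 0 t = (φ t - g x) / t := by
      rw [slope_def_field, hφ0, sub_zero]
    rw [hs, div_le_iff₀ ht0]
    nlinarith [hcvx]
  exact le_of_tendsto htend hev

/-- Cauchy–Schwarz in `ℝ²`. -/
theorem cs2 (a b c d : ℝ) :
    a * b + c * d ≤ Real.sqrt (a ^ 2 + c ^ 2) * Real.sqrt (b ^ 2 + d ^ 2) := by
  rw [← Real.sqrt_mul (by positivity)]
  exact Real.le_sqrt_of_sq_le (by nlinarith [sq_nonneg (a * d - b * c)])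

theorem inner_pair_le {E F : Type*} [NormedAddCommGroup E] [InnerProductSpace ℝ E]
    [NormedAddCommGroup F] [InnerProductSpace ℝ F] (v1 g1 : E) (v2 g2 : F) :
    ⟪v1, g1⟫ + ⟪v2, g2⟫
      ≤ Real.sqrt (‖v1‖ ^ 2 + ‖v2‖ ^ 2) * Real.sqrt (‖g1‖ ^ 2 + ‖g2‖ ^ 2) :=
  le_trans (add_le_add (real_inner_le_norm v1 g1) (real_inner_le_norm v2 g2)) (cs2 _ _ _ _)

theorem norm_sub_smul_sq {E : Type*} [NormedAddCommGroup E] [InnerProductSpace ℝ E]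
    (a c : E) (t : ℝ) :
    ‖a - t • c‖ ^ 2 = ‖a‖ ^ 2 - 2 * t * ⟪a, c⟫ + t ^ 2 * ‖c‖ ^ 2 := by
  rw [norm_sub_sq_real, real_inner_smul_right, norm_smul, Real.norm_eq_abs, mul_pow, sq_abs]
  ring

theorem norm_decomp {E : Type*} [NormedAddCommGroup E] [InnerProductSpace ℝ E] (p p' g : E) :
    ‖p + p'‖ ^ 2
      = ‖(p - g) + (p' - g)‖ ^ 2 + 4 * ⟪p - g, g⟫ + 4 * ⟪p' - g, g⟫ + 4 * ‖g‖ ^ 2 := by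
  have h : p + p' = ((p - g) + (p' - g)) + (g + g) := by abel
  have hg : ‖g + g‖ ^ 2 = 4 * ‖g‖ ^ 2 := by
    rw [norm_add_sq_real, real_inner_self_eq_norm_sq]; ring
  rw [h, norm_add_sq_real, hg, inner_add_right, inner_add_left]
  ring

end Aux

theorem key_scalar (u a1 b1 a2 b2 gX gZ W1 W2 n1 n2 n3 n4 D1 D2 al r3 : ℝ)
    (hr3 : r3 ^ 2 = 3) (hr3b : r3 ≤ 2)
    (halsq : al ^ 2 = gX + gZ)
    (hW1 : W1 ≤ (n1 + n3) ^ 2) (hW2 : W2 ≤ (n2 + n4) ^ 2)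
    (hcs : n1 * n3 + n2 * n4 ≤ D1 * D2)
    (hD1sq : D1 ^ 2 = n1 ^ 2 + n2 ^ 2) (hD2sq : D2 ^ 2 = n3 ^ 2 + n4 ^ 2)
    (hb1 : -(D1 * al) ≤ (2 * u - 1) * (a1 + b1))
    (hb2 : -(D2 * al) ≤ (1 - 2 * u) * (a2 + b2))
    (hDsum : D1 + D2 ≤ (r3 - 1) * al)
    (hD10 : 0 ≤ D1) (hD20 : 0 ≤ D2) (hal0 : 0 ≤ al) :
    (1/4) * ((W1 + 4 * a1 + 4 * a2 + 4 * gX) + (W2 + 4 * b1 + 4 * b2 + 4 * gZ))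
      ≤ 2 * u * ((gX + a1) + (gZ + b1)) + 2 * (1 - u) * ((gX + a2) + (gZ + b2)) := by
  have hsq : (D1 + D2) * (D1 + D2) ≤ ((r3 - 1) * al) * ((r3 - 1) * al) :=
    mul_self_le_mul_self (by linarith) hDsum
  have hlin : (D1 + D2) * al ≤ ((r3 - 1) * al) * al :=
    mul_le_mul_of_nonneg_right hDsum hal0
  have hsal : r3 * al ^ 2 ≤ 2 * al ^ 2 :=
    mul_le_mul_of_nonneg_right hr3b (sq_nonneg al)
  have h3al : r3 ^ 2 * al ^ 2 = 3 * al ^ 2 := by rw [hr3]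
  nlinarith [hW1, hW2, hcs, hsq, hlin, hsal, h3al, hb1, hb2, halsq, hD1sq, hD2sq]

set_option maxHeartbeats 1000000 in
/-- One-step descent inequality for the RAMPAGE+ update in unconstrained smooth
convex-concave min-max games, with the antithetic pair `u` and `1 - u`. The joint state
is split into its two coordinates and squared norms in the product are the sums of the
squared component norms. -/
theorem rampage_plus_one_step_minmax {n m : ℕ}
    (f : EuclideanSpace ℝ (Fin n) → EuclideanSpace ℝ (Fin m) → ℝ)
    (hf : ContDiff ℝ 1 fun q : EuclideanSpace ℝ (Fin n) × EuclideanSpace ℝ (Fin m) => f q.1 q.2)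
    (hconv : ∀ z, ConvexOn ℝ Set.univ fun x => f x z)
    (hconc : ∀ x, ConcaveOn ℝ Set.univ fun z => f x z)
    (Fx : EuclideanSpace ℝ (Fin n) → EuclideanSpace ℝ (Fin m) → EuclideanSpace ℝ (Fin n))
    (Fz : EuclideanSpace ℝ (Fin n) → EuclideanSpace ℝ (Fin m) → EuclideanSpace ℝ (Fin m))
    (hFx : ∀ x z, Fx x z = gradient (fun x' => f x' z) x)
    (hFz : ∀ x z, Fz x z = -gradient (fun z' => f x z') z)
    (L η : ℝ)
    (hLip : ∀ x z x' z',
      Real.sqrt (‖Fx x z - Fx x' z'‖ ^ 2 + ‖Fz x z - Fz x' z'‖ ^ 2)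
        ≤ L * Real.sqrt (‖x - x'‖ ^ 2 + ‖z - z'‖ ^ 2))
    (hη0 : 0 < η) (hη : η ≤ (Real.sqrt 3 - 1) / (2 * L))
    (xt x : EuclideanSpace ℝ (Fin n)) (zt z : EuclideanSpace ℝ (Fin m))
    (u : ℝ) (hu : u ∈ Set.Icc (0:ℝ) 1)
    (xy xy' xp : EuclideanSpace ℝ (Fin n)) (zy zy' zp : EuclideanSpace ℝ (Fin m))
    (hxy : xy = xt - (2 * η * u) • Fx xt zt)
    (hzy : zy = zt - (2 * η * u) • Fz xt zt)
    (hxy' : xy' = xt - (2 * η * (1 - u)) • Fx xt zt)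
    (hzy' : zy' = zt - (2 * η * (1 - u)) • Fz xt zt)
    (hxp : xp = xt - (η/2) • (Fx xy zy + Fx xy' zy'))
    (hzp : zp = zt - (η/2) • (Fz xy zy + Fz xy' zy')) :
    η * ((f xy z - f x zy) + (f xy' z - f x zy'))
      ≤ (‖xt - x‖ ^ 2 + ‖zt - z‖ ^ 2) - (‖xp - x‖ ^ 2 + ‖zp - z‖ ^ 2) := by
  obtain ⟨hu0, hu1⟩ := hu
  have hs3 : Real.sqrt 3 ^ 2 = 3 := Real.sq_sqrt (by norm_num)
  have hs30 : 0 ≤ Real.sqrt 3 := Real.sqrt_nonneg 3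
  have hs3a : 1 < Real.sqrt 3 := by nlinarith
  have hs3b : Real.sqrt 3 ≤ 2 := by nlinarith
  have hL : 0 < L := by
    rcases lt_trichotomy L 0 with h | h | h
    · have : (Real.sqrt 3 - 1) / (2 * L) < 0 :=
        div_neg_of_pos_of_neg (by linarith) (by linarith)
      linarith
    · rw [h, mul_zero, div_zero] at hη; linarith
    · exact h
  have hεle : 2 * η * L ≤ Real.sqrt 3 - 1 := by
    rw [le_div_iff₀ (by linarith : (0:ℝ) < 2 * L)] at hη
    nlinarith
  -- differentiability of the partial maps
  have hdiff : Differentiable ℝ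
      (fun q : EuclideanSpace ℝ (Fin n) × EuclideanSpace ℝ (Fin m) => f q.1 q.2) :=
    hf.differentiable one_ne_zero
  have hdx : ∀ a b, DifferentiableAt ℝ (fun x' => f x' b) a := by
    intro a b
    have h1 : DifferentiableAt ℝ (fun x' : EuclideanSpace ℝ (Fin n) => (x', b)) a :=
      differentiableAt_id.prodMk (differentiableAt_const b)
    have := (hdiff (a, b)).comp a h1
    simpa [Function.comp_def] using this
  have hdz : ∀ a b, DifferentiableAt ℝ (fun z' => f a z') b := by
    intro a b
    have h1 : DifferentiableAt ℝ (fun z' : EuclideanSpace ℝ (Fin m) => (a, z')) b :=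
      (differentiableAt_const a).prodMk differentiableAt_id
    have := (hdiff (a, b)).comp b h1
    simpa [Function.comp_def] using this
  have hGx : ∀ a b, HasGradientAt (fun x' => f x' b) (Fx a b) a := by
    intro a b; rw [hFx]; exact (hdx a b).hasGradientAt
  have hGz : ∀ a b, HasGradientAt (fun z' => -f a z') (Fz a b) b := by
    intro a b
    have h1 := (hdz a b).hasGradientAt
    have h2 : HasGradientAt (fun z' => -f a z')
        (-(gradient (fun z' => f a z') b)) b := by
      rw [hasGradientAt_iff_hasFDerivAt] at h1 ⊢
      rw [map_neg]
      exact h1.neg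
    rw [hFz]; exact h2
  have hncc : ∀ a, ConvexOn ℝ Set.univ fun z' => -f a z' := by
    intro a
    simpa [Pi.neg_def] using (hconc a).neg
  -- abbreviations
  set gx := Fx xt zt with hgx
  set gz := Fz xt zt with hgz
  set p := Fx xy zy with hp
  set q := Fz xy zy with hq
  set p' := Fx xy' zy' with hp'
  set q' := Fz xy' zy' with hq'
  set al := Real.sqrt (‖gx‖ ^ 2 + ‖gz‖ ^ 2) with hal
  set D1 := Real.sqrt (‖p - gx‖ ^ 2 + ‖q - gz‖ ^ 2) with hD1
  set D2 := Real.sqrt (‖p' - gx‖ ^ 2 + ‖q' - gz‖ ^ 2) with hD2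
  have hal0 : 0 ≤ al := Real.sqrt_nonneg _
  have hD10 : 0 ≤ D1 := Real.sqrt_nonneg _
  have hD20 : 0 ≤ D2 := Real.sqrt_nonneg _
  have halsq : al ^ 2 = ‖gx‖ ^ 2 + ‖gz‖ ^ 2 := Real.sq_sqrt (by positivity)
  have hD1sq : D1 ^ 2 = ‖p - gx‖ ^ 2 + ‖q - gz‖ ^ 2 := Real.sq_sqrt (by positivity)
  have hD2sq : D2 ^ 2 = ‖p' - gx‖ ^ 2 + ‖q' - gz‖ ^ 2 := Real.sq_sqrt (by positivity)
  -- step A : convexity/concavity bounds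
  have hA1 : f xy z - f x zy ≤ ⟪p, xy - x⟫ + ⟪q, zy - z⟫ := by
    have c1 : ⟪p, x - xy⟫ ≤ f x zy - f xy zy := convexOn_grad_le (hconv zy) (hGx xy zy) x
    have c2 : ⟪q, z - zy⟫ ≤ -f xy z - -f xy zy := convexOn_grad_le (hncc xy) (hGz xy zy) z
    have e1 : ⟪p, x - xy⟫ = -⟪p, xy - x⟫ := by rw [← inner_neg_right, neg_sub]
    have e2 : ⟪q, z - zy⟫ = -⟪q, zy - z⟫ := by rw [← inner_neg_right, neg_sub]
    rw [e1] at c1; rw [e2] at c2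
    linarith
  have hA2 : f xy' z - f x zy' ≤ ⟪p', xy' - x⟫ + ⟪q', zy' - z⟫ := by
    have c1 : ⟪p', x - xy'⟫ ≤ f x zy' - f xy' zy' :=
      convexOn_grad_le (hconv zy') (hGx xy' zy') x
    have c2 : ⟪q', z - zy'⟫ ≤ -f xy' z - -f xy' zy' :=
      convexOn_grad_le (hncc xy') (hGz xy' zy') z
    have e1 : ⟪p', x - xy'⟫ = -⟪p', xy' - x⟫ := by rw [← inner_neg_right, neg_sub]
    have e2 : ⟪q', z - zy'⟫ = -⟪q', zy' - z⟫ := by rw [← inner_neg_right, neg_sub]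
    rw [e1] at c1; rw [e2] at c2
    linarith
  -- step B : exact expansion of the right-hand side
  have hRx : ‖xp - x‖ ^ 2
      = ‖xt - x‖ ^ 2 - 2 * (η/2) * ⟪xt - x, p + p'⟫ + (η/2) ^ 2 * ‖p + p'‖ ^ 2 := by
    rw [hxp, sub_right_comm]
    exact norm_sub_smul_sq (xt - x) (p + p') (η/2)
  have hRz : ‖zp - z‖ ^ 2
      = ‖zt - z‖ ^ 2 - 2 * (η/2) * ⟪zt - z, q + q'⟫ + (η/2) ^ 2 * ‖q + q'‖ ^ 2 := by
    rw [hzp, sub_right_comm]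
    exact norm_sub_smul_sq (zt - z) (q + q') (η/2)
  have hR : (‖xt - x‖ ^ 2 + ‖zt - z‖ ^ 2) - (‖xp - x‖ ^ 2 + ‖zp - z‖ ^ 2)
      = η * (⟪p, xt - x⟫ + ⟪p', xt - x⟫ + ⟪q, zt - z⟫ + ⟪q', zt - z⟫)
        - (η ^ 2 / 4) * (‖p + p'‖ ^ 2 + ‖q + q'‖ ^ 2) := by
    rw [hRx, hRz, real_inner_comm (p + p') (xt - x), real_inner_comm (q + q') (zt - z),
      inner_add_left, inner_add_left]
    ring
  -- step C : rewriting the inner products using the update rule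
  have i1 : ⟪p, xy - x⟫ = ⟪p, xt - x⟫ - 2 * η * u * ⟪p, gx⟫ := by
    rw [hxy, sub_right_comm, inner_sub_right, real_inner_smul_right]
  have i2 : ⟪q, zy - z⟫ = ⟪q, zt - z⟫ - 2 * η * u * ⟪q, gz⟫ := by
    rw [hzy, sub_right_comm, inner_sub_right, real_inner_smul_right]
  have i3 : ⟪p', xy' - x⟫ = ⟪p', xt - x⟫ - 2 * η * (1 - u) * ⟪p', gx⟫ := by
    rw [hxy', sub_right_comm, inner_sub_right, real_inner_smul_right]
  have i4 : ⟪q', zy' - z⟫ = ⟪q', zt - z⟫ - 2 * η * (1 - u) * ⟪q', gz⟫ := by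
    rw [hzy', sub_right_comm, inner_sub_right, real_inner_smul_right]
  -- Lipschitz bounds
  have lip1 : D1 ≤ L * (2 * η * u * al) := by
    have h0 := hLip xy zy xt zt
    rw [← hp, ← hq, ← hgx, ← hgz] at h0
    have e1 : ‖xy - xt‖ ^ 2 = (2 * η * u) ^ 2 * ‖gx‖ ^ 2 := by
      rw [hxy, sub_sub_cancel_left, norm_neg, norm_smul, Real.norm_eq_abs, mul_pow, sq_abs]
    have e2 : ‖zy - zt‖ ^ 2 = (2 * η * u) ^ 2 * ‖gz‖ ^ 2 := by
      rw [hzy, sub_sub_cancel_left, norm_neg, norm_smul, Real.norm_eq_abs, mul_pow, sq_abs]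
    have e3 : Real.sqrt (‖xy - xt‖ ^ 2 + ‖zy - zt‖ ^ 2) = 2 * η * u * al := by
      rw [e1, e2, ← mul_add, Real.sqrt_mul (sq_nonneg _),
        Real.sqrt_sq (mul_nonneg (mul_nonneg (by norm_num) hη0.le) hu0 : (0:ℝ) ≤ 2 * η * u)]
    rw [e3] at h0
    exact h0
  have lip2 : D2 ≤ L * (2 * η * (1 - u) * al) := by
    have h0 := hLip xy' zy' xt zt
    rw [← hp', ← hq', ← hgx, ← hgz] at h0
    have e1 : ‖xy' - xt‖ ^ 2 = (2 * η * (1 - u)) ^ 2 * ‖gx‖ ^ 2 := by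
      rw [hxy', sub_sub_cancel_left, norm_neg, norm_smul, Real.norm_eq_abs, mul_pow, sq_abs]
    have e2 : ‖zy' - zt‖ ^ 2 = (2 * η * (1 - u)) ^ 2 * ‖gz‖ ^ 2 := by
      rw [hzy', sub_sub_cancel_left, norm_neg, norm_smul, Real.norm_eq_abs, mul_pow, sq_abs]
    have e3 : Real.sqrt (‖xy' - xt‖ ^ 2 + ‖zy' - zt‖ ^ 2) = 2 * η * (1 - u) * al := by
      rw [e1, e2, ← mul_add, Real.sqrt_mul (sq_nonneg _),
        Real.sqrt_sq (mul_nonneg (mul_nonneg (by norm_num) hη0.le) (by linarith) : (0:ℝ) ≤ 2 * η * (1 - u))]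
    rw [e3] at h0
    exact h0
  have hDsum : D1 + D2 ≤ (Real.sqrt 3 - 1) * al := by
    have h1 : 2 * η * L * al ≤ (Real.sqrt 3 - 1) * al :=
      mul_le_mul_of_nonneg_right hεle hal0
    linarith [lip1, lip2, h1]
  -- bounds on the cross terms
  have habs1 : |⟪p - gx, gx⟫ + ⟪q - gz, gz⟫| ≤ D1 * al := by
    have hplus : ⟪p - gx, gx⟫ + ⟪q - gz, gz⟫ ≤ D1 * al := inner_pair_le _ _ _ _
    have hminus : -(⟪p - gx, gx⟫ + ⟪q - gz, gz⟫) ≤ D1 * al := by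
      have h := inner_pair_le (-(p - gx)) gx (-(q - gz)) gz
      rw [inner_neg_left, inner_neg_left, norm_neg, norm_neg, ← hD1, ← hal] at h
      linarith
    exact abs_le.2 ⟨by linarith, hplus⟩
  have habs2 : |⟪p' - gx, gx⟫ + ⟪q' - gz, gz⟫| ≤ D2 * al := by
    have hplus : ⟪p' - gx, gx⟫ + ⟪q' - gz, gz⟫ ≤ D2 * al := inner_pair_le _ _ _ _
    have hminus : -(⟪p' - gx, gx⟫ + ⟪q' - gz, gz⟫) ≤ D2 * al := by
      have h := inner_pair_le (-(p' - gx)) gx (-(q' - gz)) gz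
      rw [inner_neg_left, inner_neg_left, norm_neg, norm_neg, ← hD2, ← hal] at h
      linarith
    exact abs_le.2 ⟨by linarith, hplus⟩
  have h2u : |2 * u - 1| ≤ 1 := abs_le.2 ⟨by linarith, by linarith⟩
  have h2u' : |1 - 2 * u| ≤ 1 := abs_le.2 ⟨by linarith, by linarith⟩
  have hb1 : -(D1 * al) ≤ (2 * u - 1) * (⟪p - gx, gx⟫ + ⟪q - gz, gz⟫) := by
    have h3 : |(2 * u - 1) * (⟪p - gx, gx⟫ + ⟪q - gz, gz⟫)| ≤ 1 * (D1 * al) := by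
      rw [abs_mul]
      exact mul_le_mul h2u habs1 (abs_nonneg _) zero_le_one
    have h4 := neg_abs_le ((2 * u - 1) * (⟪p - gx, gx⟫ + ⟪q - gz, gz⟫))
    linarith
  have hb2 : -(D2 * al) ≤ (1 - 2 * u) * (⟪p' - gx, gx⟫ + ⟪q' - gz, gz⟫) := by
    have h3 : |(1 - 2 * u) * (⟪p' - gx, gx⟫ + ⟪q' - gz, gz⟫)| ≤ 1 * (D2 * al) := by
      rw [abs_mul]
      exact mul_le_mul h2u' habs2 (abs_nonneg _) zero_le_one
    have h4 := neg_abs_le ((1 - 2 * u) * (⟪p' - gx, gx⟫ + ⟪q' - gz, gz⟫))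
    linarith
  -- the key inequality
  have key : (1/4) * (‖p + p'‖ ^ 2 + ‖q + q'‖ ^ 2)
      ≤ 2 * u * (⟪p, gx⟫ + ⟪q, gz⟫) + 2 * (1 - u) * (⟪p', gx⟫ + ⟪q', gz⟫) := by
    have nd1 := norm_decomp p p' gx
    have nd2 := norm_decomp q q' gz
    have ip1 : ⟪p, gx⟫ = ‖gx‖ ^ 2 + ⟪p - gx, gx⟫ := by
      rw [inner_sub_left, real_inner_self_eq_norm_sq]; ring
    have ip2 : ⟪q, gz⟫ = ‖gz‖ ^ 2 + ⟪q - gz, gz⟫ := by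
      rw [inner_sub_left, real_inner_self_eq_norm_sq]; ring
    have ip3 : ⟪p', gx⟫ = ‖gx‖ ^ 2 + ⟪p' - gx, gx⟫ := by
      rw [inner_sub_left, real_inner_self_eq_norm_sq]; ring
    have ip4 : ⟪q', gz⟫ = ‖gz‖ ^ 2 + ⟪q' - gz, gz⟫ := by
      rw [inner_sub_left, real_inner_self_eq_norm_sq]; ring
    have hW1 : ‖(p - gx) + (p' - gx)‖ ^ 2 ≤ (‖p - gx‖ + ‖p' - gx‖) ^ 2 :=
      pow_le_pow_left₀ (norm_nonneg _) (norm_add_le _ _) 2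
    have hW2 : ‖(q - gz) + (q' - gz)‖ ^ 2 ≤ (‖q - gz‖ + ‖q' - gz‖) ^ 2 :=
      pow_le_pow_left₀ (norm_nonneg _) (norm_add_le _ _) 2
    have hcs : ‖p - gx‖ * ‖p' - gx‖ + ‖q - gz‖ * ‖q' - gz‖ ≤ D1 * D2 :=
      cs2 ‖p - gx‖ ‖p' - gx‖ ‖q - gz‖ ‖q' - gz‖
    rw [nd1, nd2, ip1, ip2, ip3, ip4]
    exact key_scalar u _ _ _ _ _ _ _ _ _ _ _ _ D1 D2 al (Real.sqrt 3)
      hs3 hs3b halsq hW1 hW2 hcs hD1sq hD2sq hb1 hb2 hDsum hD10 hD20 hal0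
  -- assemble everything
  have l0 : (f xy z - f x zy) + (f xy' z - f x zy')
      ≤ (⟪p, xy - x⟫ + ⟪q, zy - z⟫) + (⟪p', xy' - x⟫ + ⟪q', zy' - z⟫) := by linarith
  have key2 := mul_le_mul_of_nonneg_left key (sq_nonneg η)
  calc η * ((f xy z - f x zy) + (f xy' z - f x zy'))
      ≤ η * ((⟪p, xy - x⟫ + ⟪q, zy - z⟫) + (⟪p', xy' - x⟫ + ⟪q', zy' - z⟫)) :=
        mul_le_mul_of_nonneg_left l0 hη0.le
    _ = η * (⟪p, xt - x⟫ + ⟪p', xt - x⟫ + ⟪q, zt - z⟫ + ⟪q', zt - z⟫)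
        - η ^ 2 * (2 * u * (⟪p, gx⟫ + ⟪q, gz⟫) + 2 * (1 - u) * (⟪p', gx⟫ + ⟪q', gz⟫)) := by
        rw [i1, i2, i3, i4]; ring
    _ ≤ η * (⟪p, xt - x⟫ + ⟪p', xt - x⟫ + ⟪q, zt - z⟫ + ⟪q', zt - z⟫)
        - (η ^ 2 / 4) * (‖p + p'‖ ^ 2 + ‖q + q'‖ ^ 2) := by linarith [key2]
    _ = (‖xt - x‖ ^ 2 + ‖zt - z‖ ^ 2) - (‖xp - x‖ ^ 2 + ‖zp - z‖ ^ 2) := hR.symm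
end

section
/- Let F : ℝ^p → ℝ^p satisfy the α-symmetric (L₀,L₁)-Lipschitz condition with α ∈ (0,1): for all θ, θ', ‖F(θ) − F(θ')‖ ≤ ( L₀ + L₁ · max_{γ∈[0,1]} ‖F(γθ + (1−γ)θ')‖^α ) · ‖θ − θ'‖. Then for all θ, θ': ‖F(θ) − F(θ')‖ ≤ ( K₀ + K₁‖F(θ)‖^α + K₂‖θ − θ'‖^{α/(1−α)} ) · ‖θ − θ'‖, where K₀ = L₀·(2^{α²/(1−α)} + 1), K₁ = L₁·2^{α²/(1−α)}, and K₂ = L₁^{1/(1−α)} · 2^{α²/(1−α)} · 3^α · (1−α)^{α/(1−α)}. -/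
open scoped RealInnerProductSpace

open Set Real Filter
open scoped NNReal Topology

lemma myrpow_subadd (x y a : ℝ) (hx : 0 ≤ x) (hy : 0 ≤ y) (h0 : 0 ≤ a) (h1 : a ≤ 1) :
    (x + y) ^ a ≤ x ^ a + y ^ a := by
  have h := NNReal.rpow_add_le_add_rpow x.toNNReal y.toNNReal h0 h1
  have hc : ((x.toNNReal + y.toNNReal : ℝ≥0) : ℝ) = x + y := by
    simp [Real.coe_toNNReal, hx, hy]
  calc (x + y) ^ a = (((x.toNNReal + y.toNNReal : ℝ≥0) : ℝ)) ^ a := by rw [hc]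
    _ = (((x.toNNReal + y.toNNReal : ℝ≥0) ^ a : ℝ≥0) : ℝ) := by
        rw [← NNReal.coe_rpow]
    _ ≤ ((x.toNNReal ^ a + y.toNNReal ^ a : ℝ≥0) : ℝ) := by exact_mod_cast h
    _ = x ^ a + y ^ a := by
        rw [NNReal.coe_add, NNReal.coe_rpow, NNReal.coe_rpow,
          Real.coe_toNNReal _ hx, Real.coe_toNNReal _ hy]

lemma myrpow_powmean_nn (x y : ℝ≥0) (a : ℝ) (h0 : 0 < a) (h1 : a ≤ 1) :
    x ^ a + y ^ a ≤ 2 ^ (1 - a) * (x + y) ^ a := by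
  have hp : 1 ≤ 1 / a := by
    rw [le_div_iff₀ h0, one_mul]; exact h1
  have h := NNReal.rpow_add_le_mul_rpow_add_rpow (x ^ a) (y ^ a) hp
  have hxa : (x ^ a) ^ (1/a) = x := by
    rw [← NNReal.rpow_mul, mul_one_div, div_self h0.ne', NNReal.rpow_one]
  have hya : (y ^ a) ^ (1/a) = y := by
    rw [← NNReal.rpow_mul, mul_one_div, div_self h0.ne', NNReal.rpow_one]
  rw [hxa, hya] at h
  have h2 : ((x ^ a + y ^ a) ^ (1/a)) ^ a ≤ (2 ^ (1/a - 1) * (x + y)) ^ a :=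
    NNReal.rpow_le_rpow h h0.le
  rw [← NNReal.rpow_mul, one_div, inv_mul_cancel₀ h0.ne', NNReal.rpow_one] at h2
  rw [NNReal.mul_rpow, ← NNReal.rpow_mul] at h2
  calc x ^ a + y ^ a ≤ 2 ^ ((a⁻¹ - 1) * a) * (x + y) ^ a := h2
    _ = 2 ^ (1 - a) * (x + y) ^ a := by
        rw [sub_mul, inv_mul_cancel₀ h0.ne', one_mul]

lemma myrpow_powmean (x y a : ℝ) (hx : 0 ≤ x) (hy : 0 ≤ y) (h0 : 0 < a) (h1 : a ≤ 1) :
    x ^ a + y ^ a ≤ 2 ^ (1 - a) * (x + y) ^ a := by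
  have h := myrpow_powmean_nn x.toNNReal y.toNNReal a h0 h1
  have := NNReal.coe_le_coe.mpr h
  simp only [NNReal.coe_add, NNReal.coe_mul, NNReal.coe_rpow, NNReal.coe_ofNat,
    Real.coe_toNNReal _ hx, Real.coe_toNNReal _ hy] at this
  exact this

/-- Core Grönwall/Bihari comparison on `[0,1]`. -/
lemma my_gronwall (g : ℝ → ℝ) (r L0 L1 α C g0 ξ ε : ℝ)
    (hα : 0 < α) (hα1 : α < 1) (hr : 0 < r) (hL0 : 0 ≤ L0) (hL1 : 0 ≤ L1) (hε : 0 < ε)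
    (hξ : 0 ≤ ξ) (hξα : L1 * ξ ^ α = L0) (hC : 0 ≤ C)
    (hg0 : g 0 ≤ g0) (hg0nn : 0 ≤ g0)
    (hgnn : ∀ x ∈ Icc (0:ℝ) 1, 0 ≤ g x)
    (hlip : ∀ s ∈ Icc (0:ℝ) 1, ∀ t ∈ Icc (0:ℝ) 1, s ≤ t → |g t - g s| ≤ C * (t - s))
    (hstep : ∀ s ∈ Icc (0:ℝ) 1, ∀ t ∈ Icc (0:ℝ) 1, s ≤ t →
      g t - g s ≤ (L0 + L1 * (g s + C * (t - s)) ^ α) * (r * (t - s))) :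
    ∀ x ∈ Icc (0:ℝ) 1,
      g x ≤ ((g0 + ε + ξ) ^ (1 - α) + (1 - α) * ((2:ℝ) ^ (1 - α) * (L1 + ε) * r)) ^ (1 - α)⁻¹
              - ξ := by
  have h1α : (0:ℝ) < 1 - α := by linarith
  set A0 : ℝ := (g0 + ε + ξ) ^ (1 - α) with hA0
  set K : ℝ := (2:ℝ) ^ (1 - α) * (L1 + ε) * r with hK
  set m : ℝ := (1 - α) * K with hm
  set p : ℝ := (1 - α)⁻¹ with hp
  have hKpos : 0 < K := by
    apply mul_pos (mul_pos (Real.rpow_pos_of_pos two_pos _) (by linarith)) hr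
  have hmpos : 0 < m := mul_pos h1α hKpos
  have hppos : 0 < p := inv_pos.mpr h1α
  have hbase : ∀ x : ℝ, 0 ≤ x → 0 < A0 + m * x := by
    intro x hx
    have : 0 < A0 := Real.rpow_pos_of_pos (by linarith) _
    nlinarith
  set W : ℝ → ℝ := fun x => (A0 + m * x) ^ p with hW
  set B : ℝ → ℝ := fun x => W x - ξ with hB
  set B' : ℝ → ℝ := fun x => m * p * (A0 + m * x) ^ (p - 1) with hB'
  -- W x ≥ ξ for x ≥ 0
  have hWge : ∀ x : ℝ, 0 ≤ x → ξ ≤ W x := by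
    intro x hx
    have h1 : ξ ^ (1 - α) ≤ A0 + m * x := by
      have : ξ ^ (1 - α) ≤ A0 := Real.rpow_le_rpow hξ (by linarith) h1α.le
      nlinarith
    have h2 : (ξ ^ (1 - α)) ^ p ≤ (A0 + m * x) ^ p :=
      Real.rpow_le_rpow (Real.rpow_nonneg hξ _) h1 hppos.le
    rwa [← Real.rpow_mul hξ, mul_inv_cancel₀ h1α.ne', Real.rpow_one] at h2
  have hWpos : ∀ x : ℝ, 0 ≤ x → 0 < W x := by
    intro x hx
    exact Real.rpow_pos_of_pos (hbase x hx) _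
  -- W x ^ α = (A0 + m x) ^ (p - 1)
  have hWα : ∀ x : ℝ, 0 ≤ x → W x ^ α = (A0 + m * x) ^ (p - 1) := by
    intro x hx
    rw [hW, ← Real.rpow_mul (hbase x hx).le]
    congr 1
    rw [hp]
    field_simp
    ring
  -- main comparison via the fencing theorem
  have main : ∀ ⦃x⦄, x ∈ Icc (0:ℝ) 1 → g x ≤ B x := by
    apply image_le_of_liminf_slope_right_lt_deriv_boundary'
      (f := g) (f' := fun x => (L0 + L1 * g x ^ α) * r) (B := B) (B' := B') (a := 0) (b := 1)
    · -- continuity of g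
      have : LipschitzOnWith C.toNNReal g (Icc (0:ℝ) 1) := by
        apply LipschitzOnWith.of_dist_le_mul
        intro s hs t ht
        rcases le_total s t with h | h
        · rw [Real.dist_eq, Real.dist_eq, abs_sub_comm (g s) (g t), abs_sub_comm s t]
          rw [abs_of_nonneg (by linarith : (0:ℝ) ≤ t - s)]
          refine (hlip s hs t ht h).trans ?_
          exact mul_le_mul_of_nonneg_right (Real.le_coe_toNNReal C) (by linarith)
        · rw [Real.dist_eq, Real.dist_eq]
          rw [abs_of_nonneg (by linarith : (0:ℝ) ≤ s - t)]
          refine (hlip t ht s hs h).trans ?_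
          exact mul_le_mul_of_nonneg_right (Real.le_coe_toNNReal C) (by linarith)
      exact this.continuousOn
    · -- slope condition
      intro x hx ρ hρ
      have hx0 : (0:ℝ) ≤ x := hx.1
      have hx1 : x < 1 := hx.2
      set φ : ℝ → ℝ := fun z => (L0 + L1 * (g x + C * (z - x)) ^ α) * r with hφ
      have hφcont : ContinuousAt φ x := by
        apply ContinuousAt.mul _ continuousAt_const
        apply ContinuousAt.add continuousAt_const
        apply ContinuousAt.mul continuousAt_const
        have hinner : ContinuousAt (fun z : ℝ => g x + C * (z - x)) x := by fun_prop
        exact hinner.rpow_const (Or.inr hα.le)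
      have hφx : φ x = (L0 + L1 * g x ^ α) * r := by
        simp [hφ]
      have hev1 : ∀ᶠ z in 𝓝[>] x, φ z < ρ := by
        have : ∀ᶠ z in 𝓝 x, φ z < ρ := by
          apply hφcont.eventually_lt_const
          rwa [hφx]
        exact nhdsWithin_le_nhds this
      have hev2 : ∀ᶠ z in 𝓝[>] x, z ∈ Ioc x 1 :=
        Ioc_mem_nhdsGT_of_mem ⟨le_rfl, hx1⟩
      refine ((hev1.and hev2).mono ?_).frequently
      rintro z ⟨hφz, hz⟩
      have hzx : 0 < z - x := by linarith [hz.1]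
      have hzI : z ∈ Icc (0:ℝ) 1 := ⟨by linarith, hz.2⟩
      have hxI : x ∈ Icc (0:ℝ) 1 := ⟨hx0, by linarith⟩
      have hst := hstep x hxI z hzI (le_of_lt hz.1)
      rw [slope_def_field, div_lt_iff₀ hzx]
      calc g z - g x ≤ (L0 + L1 * (g x + C * (z - x)) ^ α) * (r * (z - x)) := hst
        _ = φ z * (z - x) := by rw [hφ]; ring
        _ < ρ * (z - x) := by exact mul_lt_mul_of_pos_right hφz hzx
    · -- g 0 ≤ B 0
      have : B 0 = g0 + ε := by
        rw [hB, hW]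
        simp only [mul_zero, add_zero]
        rw [hA0, ← Real.rpow_mul (by linarith), mul_inv_cancel₀ h1α.ne', Real.rpow_one]
        try ring
      rw [this]; linarith
    · -- continuity of B
      apply ContinuousOn.sub _ continuousOn_const
      apply Continuous.continuousOn
      apply (Real.continuous_rpow_const hppos.le).comp
      fun_prop
    · -- derivative of B
      intro x hx
      have hD : HasDerivAt B (B' x) x := by
        have h2 : HasDerivAt (fun z : ℝ => A0 + m * z) m x := by
          simpa using ((hasDerivAt_id x).const_mul m).const_add A0
        have h3 := h2.rpow_const (p := p) (Or.inl (hbase x hx.1).ne')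
        have h4 := h3.sub_const ξ
        convert h4 using 1
      exact hD.hasDerivWithinAt
    · -- strict differential inequality at contact points
      intro x hx hgB
      have hx0 : (0:ℝ) ≤ x := hx.1
      have hWx := hWpos x hx0
      have hWξ := hWge x hx0
      have key : L0 + L1 * g x ^ α ≤ L1 * ((2:ℝ) ^ (1 - α) * W x ^ α) := by
        rw [hgB, hB]
        have hpm := myrpow_powmean ξ (W x - ξ) α hξ (by linarith) hα hα1.le
        have : ξ + (W x - ξ) = W x := by ring
        rw [this] at hpm
        calc L0 + L1 * (W x - ξ) ^ α = L1 * (ξ ^ α + (W x - ξ) ^ α) := by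
              rw [← hξα]; ring
          _ ≤ L1 * ((2:ℝ) ^ (1 - α) * W x ^ α) := by
              exact mul_le_mul_of_nonneg_left hpm hL1
      have hWαpos : 0 < W x ^ α := Real.rpow_pos_of_pos hWx _
      have h2pos : (0:ℝ) < (2:ℝ) ^ (1 - α) := Real.rpow_pos_of_pos two_pos _
      calc (L0 + L1 * g x ^ α) * r ≤ L1 * ((2:ℝ) ^ (1 - α) * W x ^ α) * r := by
            exact mul_le_mul_of_nonneg_right key hr.le
        _ < (L1 + ε) * ((2:ℝ) ^ (1 - α) * W x ^ α) * r := by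
            apply mul_lt_mul_of_pos_right _ hr
            apply mul_lt_mul_of_pos_right _ (by positivity)
            linarith
        _ = B' x := by
            have hmp : m * p = K := by
              rw [hm, hp]; field_simp
            simp only [hB']
            rw [← hWα x hx0, hmp, hK]; ring
  -- conclude with monotonicity of W
  intro x hx
  have h1 : g x ≤ W x - ξ := main hx
  have h2 : W x ≤ W 1 := by
    simp only [hW]
    apply Real.rpow_le_rpow (hbase x hx.1).le _ hppos.le
    nlinarith [hx.2, hmpos]
  have h3 : W 1 = ((g0 + ε + ξ) ^ (1 - α) + (1 - α) * ((2:ℝ) ^ (1 - α) * (L1 + ε) * r)) ^ (1 - α)⁻¹ := by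
    simp only [hW]
    congr 1
    rw [hm, hK, hA0]; ring
  rw [← h3]
  linarith

lemma my_final_algebra (L0 L1 α g0 r : ℝ) (hα0 : 0 < α) (hα1 : α < 1)
    (hL0 : 0 ≤ L0) (hL1 : 0 < L1) (hg0 : 0 ≤ g0) (hr : 0 ≤ r) :
    (L0 + L1 * ((((g0 + (L0 / L1) ^ α⁻¹) ^ (1 - α)
        + (1 - α) * ((2:ℝ) ^ (1 - α) * L1 * r)) ^ (1 - α)⁻¹ - (L0 / L1) ^ α⁻¹)) ^ α) * r
      ≤ (L0 * ((2:ℝ) ^ (α ^ 2 / (1 - α)) + 1)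
          + (L1 * (2:ℝ) ^ (α ^ 2 / (1 - α))) * g0 ^ α
          + (L1 ^ (1 / (1 - α)) * (2:ℝ) ^ (α ^ 2 / (1 - α)) * (3:ℝ) ^ α
              * (1 - α) ^ (α / (1 - α))) * r ^ (α / (1 - α))) * r := by
  have h1α : (0:ℝ) < 1 - α := by linarith
  set p : ℝ := (1 - α)⁻¹ with hp
  set ξ : ℝ := (L0 / L1) ^ α⁻¹ with hξ
  have hξnn : 0 ≤ ξ := Real.rpow_nonneg (div_nonneg hL0 hL1.le) _
  have hξα : L1 * ξ ^ α = L0 := by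
    rw [hξ, ← Real.rpow_mul (div_nonneg hL0 hL1.le), inv_mul_cancel₀ hα0.ne', Real.rpow_one,
      mul_div_cancel₀ _ hL1.ne']
  set w : ℝ := ((1 - α) * L1 * r) ^ p with hw
  have hwnn : 0 ≤ w := Real.rpow_nonneg (by positivity) _
  set S : ℝ := (g0 + ξ) ^ (1 - α) + (1 - α) * ((2:ℝ) ^ (1 - α) * L1 * r) with hS
  set V : ℝ := g0 + ξ + 2 * w with hV
  have hSnn : 0 ≤ S := by
    have : (0:ℝ) ≤ (g0 + ξ) ^ (1 - α) := Real.rpow_nonneg (by linarith) _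
    have h2 : (0:ℝ) ≤ (1 - α) * ((2:ℝ) ^ (1 - α) * L1 * r) := by positivity
    linarith
  set U : ℝ := S ^ p - ξ with hU
  have hSpξ : ξ ≤ S ^ p := by
    have h1 : ξ ^ (1 - α) ≤ S := by
      have := Real.rpow_le_rpow hξnn (by linarith : ξ ≤ g0 + ξ) h1α.le
      have h2 : (0:ℝ) ≤ (1 - α) * ((2:ℝ) ^ (1 - α) * L1 * r) := by positivity
      rw [hS]; linarith
    have h2 : (ξ ^ (1 - α)) ^ p ≤ S ^ p :=
      Real.rpow_le_rpow (Real.rpow_nonneg hξnn _) h1 (by positivity)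
    rwa [← Real.rpow_mul hξnn, hp, mul_inv_cancel₀ h1α.ne', Real.rpow_one] at h2
  have hUnn : 0 ≤ U := by rw [hU]; linarith
  -- Step 1 : U ^ α ≤ S ^ (p * α)
  have step1 : U ^ α ≤ S ^ (p * α) := by
    have h1 : U ≤ S ^ p := by rw [hU]; linarith
    have h2 := Real.rpow_le_rpow hUnn h1 hα0.le
    rwa [← Real.rpow_mul hSnn] at h2
  -- Step 2 : S ≤ 2 ^ α * V ^ (1 - α)
  have hwid : (2 * w) ^ (1 - α) = (2:ℝ) ^ (1 - α) * ((1 - α) * L1 * r) := by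
    rw [Real.mul_rpow (by norm_num) hwnn, hw, ← Real.rpow_mul (by positivity), hp,
      inv_mul_cancel₀ h1α.ne', Real.rpow_one]
  have step2 : S ≤ 2 ^ α * V ^ (1 - α) := by
    have hpm := myrpow_powmean (g0 + ξ) (2 * w) (1 - α) (by linarith) (by positivity)
      h1α (by linarith)
    rw [hwid] at hpm
    have h1 : (1:ℝ) - (1 - α) = α := by ring
    rw [h1] at hpm
    calc S = (g0 + ξ) ^ (1 - α) + (2:ℝ) ^ (1 - α) * ((1 - α) * L1 * r) := by rw [hS]; ring
      _ ≤ 2 ^ α * (g0 + ξ + 2 * w) ^ (1 - α) := hpm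
      _ = 2 ^ α * V ^ (1 - α) := by rw [hV]
  -- Step 3 : S ^ (p * α) ≤ 2 ^ (α ^ 2 / (1 - α)) * V ^ α
  have hVnn : 0 ≤ V := by rw [hV]; positivity
  have step3 : S ^ (p * α) ≤ (2:ℝ) ^ (α ^ 2 / (1 - α)) * V ^ α := by
    have h1 : S ^ (p * α) ≤ (2 ^ α * V ^ (1 - α)) ^ (p * α) :=
      Real.rpow_le_rpow hSnn step2 (by positivity)
    have h2 : ((2:ℝ) ^ α * V ^ (1 - α)) ^ (p * α)
        = (2:ℝ) ^ (α ^ 2 / (1 - α)) * V ^ α := by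
      rw [Real.mul_rpow (by positivity) (Real.rpow_nonneg hVnn _),
        ← Real.rpow_mul (by norm_num : (0:ℝ) ≤ 2), ← Real.rpow_mul hVnn]
      congr 1
      · congr 1
        rw [hp]; rw [div_eq_mul_inv, sq]; ring
      · congr 1
        rw [hp]; field_simp
    rw [← h2]; exact h1
  -- Step 4 : V ^ α ≤ g0 ^ α + ξ ^ α + (2 * w) ^ α
  have step4 : V ^ α ≤ g0 ^ α + ξ ^ α + (2 * w) ^ α := by
    have h1 : V ^ α ≤ (g0 + ξ) ^ α + (2 * w) ^ α := by
      rw [hV]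
      exact myrpow_subadd (g0 + ξ) (2 * w) α (by linarith) (by positivity) hα0.le hα1.le
    have h2 : (g0 + ξ) ^ α ≤ g0 ^ α + ξ ^ α :=
      myrpow_subadd g0 ξ α hg0 hξnn hα0.le hα1.le
    linarith
  -- Step 6 : L1 * (2*w) ^ α = 2 ^ α * ((1-α) ^ (α/(1-α)) * (L1 ^ (1/(1-α)) * r ^ (α/(1-α))))
  have step6 : L1 * (2 * w) ^ α
      = 2 ^ α * ((1 - α) ^ (α / (1 - α)) * (L1 ^ (1 / (1 - α)) * r ^ (α / (1 - α)))) := by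
    have hwα : w ^ α = ((1 - α) * L1 * r) ^ (α / (1 - α)) := by
      rw [hw, ← Real.rpow_mul (by positivity)]
      congr 1
      rw [hp]; field_simp
    have hsplit : ((1 - α) * L1 * r) ^ (α / (1 - α))
        = (1 - α) ^ (α / (1 - α)) * L1 ^ (α / (1 - α)) * r ^ (α / (1 - α)) := by
      rw [Real.mul_rpow (by positivity) hr, Real.mul_rpow h1α.le hL1.le]
    have hL1split : L1 * L1 ^ (α / (1 - α)) = L1 ^ (1 / (1 - α)) := by
      have : (1:ℝ) / (1 - α) = 1 + α / (1 - α) := by field_simp; ring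
      rw [this, Real.rpow_add hL1, Real.rpow_one]
    rw [Real.mul_rpow (by norm_num) hwnn, hwα, hsplit]
    calc L1 * ((2:ℝ) ^ α * ((1 - α) ^ (α / (1 - α)) * L1 ^ (α / (1 - α)) * r ^ (α / (1 - α))))
        = 2 ^ α * ((1 - α) ^ (α / (1 - α)) * ((L1 * L1 ^ (α / (1 - α))) * r ^ (α / (1 - α)))) := by
          ring
      _ = 2 ^ α * ((1 - α) ^ (α / (1 - α)) * (L1 ^ (1 / (1 - α)) * r ^ (α / (1 - α)))) := by
          rw [hL1split]
  -- assemble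
  have h23 : (2:ℝ) ^ α ≤ (3:ℝ) ^ α := Real.rpow_le_rpow (by norm_num) (by norm_num) hα0.le
  have hc_nn : (0:ℝ) ≤ (2:ℝ) ^ (α ^ 2 / (1 - α)) := by positivity
  have hbracket : L0 + L1 * U ^ α
      ≤ L0 * ((2:ℝ) ^ (α ^ 2 / (1 - α)) + 1)
        + (L1 * (2:ℝ) ^ (α ^ 2 / (1 - α))) * g0 ^ α
        + (L1 ^ (1 / (1 - α)) * (2:ℝ) ^ (α ^ 2 / (1 - α)) * (3:ℝ) ^ α
            * (1 - α) ^ (α / (1 - α))) * r ^ (α / (1 - α)) := by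
    have h1 : L1 * U ^ α ≤ L1 * ((2:ℝ) ^ (α ^ 2 / (1 - α)) * V ^ α) :=
      mul_le_mul_of_nonneg_left (step1.trans step3) hL1.le
    have h2 : L1 * ((2:ℝ) ^ (α ^ 2 / (1 - α)) * V ^ α)
        ≤ (2:ℝ) ^ (α ^ 2 / (1 - α)) * (L1 * g0 ^ α + L1 * ξ ^ α + L1 * (2 * w) ^ α) := by
      have := mul_le_mul_of_nonneg_left step4 (mul_nonneg hL1.le hc_nn)
      calc L1 * ((2:ℝ) ^ (α ^ 2 / (1 - α)) * V ^ α)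
          = (L1 * (2:ℝ) ^ (α ^ 2 / (1 - α))) * V ^ α := by ring
        _ ≤ (L1 * (2:ℝ) ^ (α ^ 2 / (1 - α))) * (g0 ^ α + ξ ^ α + (2 * w) ^ α) := this
        _ = (2:ℝ) ^ (α ^ 2 / (1 - α)) * (L1 * g0 ^ α + L1 * ξ ^ α + L1 * (2 * w) ^ α) := by ring
    have h3 : (2:ℝ) ^ (α ^ 2 / (1 - α)) * (L1 * (2 * w) ^ α)
        ≤ (L1 ^ (1 / (1 - α)) * (2:ℝ) ^ (α ^ 2 / (1 - α)) * (3:ℝ) ^ α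
            * (1 - α) ^ (α / (1 - α))) * r ^ (α / (1 - α)) := by
      rw [step6]
      have hfac : (0:ℝ) ≤ (1 - α) ^ (α / (1 - α)) * (L1 ^ (1 / (1 - α)) * r ^ (α / (1 - α))) := by
        have := Real.rpow_nonneg h1α.le (α / (1 - α))
        have := Real.rpow_nonneg hL1.le (1 / (1 - α))
        have := Real.rpow_nonneg hr (α / (1 - α))
        positivity
      calc (2:ℝ) ^ (α ^ 2 / (1 - α))
            * ((2:ℝ) ^ α * ((1 - α) ^ (α / (1 - α)) * (L1 ^ (1 / (1 - α)) * r ^ (α / (1 - α)))))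
          ≤ (2:ℝ) ^ (α ^ 2 / (1 - α))
            * ((3:ℝ) ^ α * ((1 - α) ^ (α / (1 - α)) * (L1 ^ (1 / (1 - α)) * r ^ (α / (1 - α))))) := by
            apply mul_le_mul_of_nonneg_left _ hc_nn
            exact mul_le_mul_of_nonneg_right h23 hfac
        _ = (L1 ^ (1 / (1 - α)) * (2:ℝ) ^ (α ^ 2 / (1 - α)) * (3:ℝ) ^ α
              * (1 - α) ^ (α / (1 - α))) * r ^ (α / (1 - α)) := by ring
    have hLξ : (2:ℝ) ^ (α ^ 2 / (1 - α)) * (L1 * ξ ^ α) = (2:ℝ) ^ (α ^ 2 / (1 - α)) * L0 := by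
      rw [hξα]
    nlinarith [h1, h2, h3, hLξ]
  exact mul_le_mul_of_nonneg_right hbracket hr


set_option maxHeartbeats 1000000

/-- Equivalent pointwise growth bound implied by the `α`-symmetric `(L₀, L₁)`-Lipschitz
condition, for `α ∈ (0,1)`. -/
theorem alpha_symmetric_lipschitz_growth {p : ℕ}
    (F : EuclideanSpace ℝ (Fin p) → EuclideanSpace ℝ (Fin p))
    (L0 L1 α : ℝ)
    (hL0 : 0 ≤ L0) (hL1 : 0 ≤ L1)
    (hα : α ∈ Set.Ioo (0:ℝ) 1)
    (hsym : ∀ θ θ' : EuclideanSpace ℝ (Fin p),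
      ‖F θ - F θ'‖
        ≤ (L0 + L1 * sSup ((fun γ : ℝ => ‖F (γ • θ + (1 - γ) • θ')‖ ^ α) '' Set.Icc 0 1))
            * ‖θ - θ'‖) :
    ∀ θ θ' : EuclideanSpace ℝ (Fin p),
      ‖F θ - F θ'‖
        ≤ (L0 * ((2:ℝ) ^ (α ^ 2 / (1 - α)) + 1)
            + (L1 * (2:ℝ) ^ (α ^ 2 / (1 - α))) * ‖F θ‖ ^ α
            + (L1 ^ (1 / (1 - α)) * (2:ℝ) ^ (α ^ 2 / (1 - α)) * (3:ℝ) ^ α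
                * (1 - α) ^ (α / (1 - α))) * ‖θ - θ'‖ ^ (α / (1 - α)))
          * ‖θ - θ'‖ := by
  obtain ⟨hα0, hα1⟩ := hα
  have h1α : (0:ℝ) < 1 - α := by linarith
  intro θ θ'
  set r : ℝ := ‖θ - θ'‖ with hrdef
  have hrnn : 0 ≤ r := norm_nonneg _
  have hFnn : (0:ℝ) ≤ ‖F θ‖ := norm_nonneg _
  -- the target RHS bracket dominates L0
  have heasy : ‖F θ - F θ'‖ ≤ L0 * r →
      ‖F θ - F θ'‖
        ≤ (L0 * ((2:ℝ) ^ (α ^ 2 / (1 - α)) + 1)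
            + (L1 * (2:ℝ) ^ (α ^ 2 / (1 - α))) * ‖F θ‖ ^ α
            + (L1 ^ (1 / (1 - α)) * (2:ℝ) ^ (α ^ 2 / (1 - α)) * (3:ℝ) ^ α
                * (1 - α) ^ (α / (1 - α))) * r ^ (α / (1 - α))) * r := by
    intro h
    refine h.trans (mul_le_mul_of_nonneg_right ?_ hrnn)
    have h1 : (0:ℝ) ≤ (2:ℝ) ^ (α ^ 2 / (1 - α)) := by positivity
    have h2 : (0:ℝ) ≤ (L1 * (2:ℝ) ^ (α ^ 2 / (1 - α))) * ‖F θ‖ ^ α := by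
      have := Real.rpow_nonneg hFnn α
      positivity
    have h3 : (0:ℝ) ≤ (L1 ^ (1 / (1 - α)) * (2:ℝ) ^ (α ^ 2 / (1 - α)) * (3:ℝ) ^ α
        * (1 - α) ^ (α / (1 - α))) * r ^ (α / (1 - α)) := by
      have := Real.rpow_nonneg hL1 (1 / (1 - α))
      have := Real.rpow_nonneg h1α.le (α / (1 - α))
      have := Real.rpow_nonneg hrnn (α / (1 - α))
      positivity
    nlinarith [mul_nonneg hL0 h1]
  by_cases hθ : θ = θ'
  · subst hθ
    apply heasy
    simp [hrdef]
  have hr : 0 < r := by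
    rw [hrdef]
    exact norm_sub_pos_iff.mpr hθ
  have key := hsym θ θ'
  by_cases hL1z : L1 = 0
  · apply heasy
    rw [hL1z, zero_mul, add_zero] at key
    exact key
  have hL1pos : 0 < L1 := lt_of_le_of_ne hL1 (Ne.symm hL1z)
  -- the function along the segment
  set g : ℝ → ℝ := fun s => ‖F ((1 - s) • θ + s • θ')‖ with hg
  have hgnn : ∀ x ∈ Icc (0:ℝ) 1, 0 ≤ g x := fun x _ => norm_nonneg _
  have hg0 : g 0 = ‖F θ‖ := by simp [hg]
  -- algebra of points on the segment
  have hcomb : ∀ γ s t : ℝ,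
      γ • ((1 - s) • θ + s • θ') + (1 - γ) • ((1 - t) • θ + t • θ')
        = (1 - (γ * s + (1 - γ) * t)) • θ + (γ * s + (1 - γ) * t) • θ' := by
    intro γ s t
    module
  have hdist : ∀ s t : ℝ, ‖((1 - t) • θ + t • θ') - ((1 - s) • θ + s • θ')‖ = |t - s| * r := by
    intro s t
    have h1 : ((1 - t) • θ + t • θ') - ((1 - s) • θ + s • θ') = (t - s) • (θ' - θ) := by
      module
    rw [h1, norm_smul, Real.norm_eq_abs, norm_sub_rev, hrdef]
  -- membership of (g s) ^ α in the sSup index set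
  have hmem : ∀ s ∈ Icc (0:ℝ) 1,
      (g s) ^ α ∈ ((fun γ : ℝ => ‖F (γ • θ + (1 - γ) • θ')‖ ^ α) '' Set.Icc 0 1) := by
    intro s hs
    refine ⟨1 - s, ⟨by linarith [hs.2], by linarith [hs.1]⟩, ?_⟩
    have h1 : (1:ℝ) - (1 - s) = s := by ring
    simp only [h1, hg]
  by_cases hbdd : BddAbove ((fun γ : ℝ => ‖F (γ • θ + (1 - γ) • θ')‖ ^ α) '' Set.Icc 0 1)
  swap
  · apply heasy
    rw [Real.sSup_of_not_bddAbove hbdd, mul_zero, add_zero] at key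
    exact key
  obtain ⟨M, hM⟩ := hbdd
  have hMnn : 0 ≤ M := le_trans (Real.rpow_nonneg (hgnn 0 ⟨le_rfl, zero_le_one⟩) α)
    (hM (hmem 0 ⟨le_rfl, zero_le_one⟩))
  -- the g-image is bounded
  have hgb : ∀ s ∈ Icc (0:ℝ) 1, g s ≤ M ^ α⁻¹ := by
    intro s hs
    have h1 : (g s) ^ α ≤ M := hM (hmem s hs)
    have h2 : ((g s) ^ α) ^ α⁻¹ ≤ M ^ α⁻¹ :=
      Real.rpow_le_rpow (Real.rpow_nonneg (hgnn s hs) _) h1 (by positivity)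
    rwa [← Real.rpow_mul (hgnn s hs), mul_inv_cancel₀ hα0.ne', Real.rpow_one] at h2
  have hGimg_bdd : BddAbove (g '' Icc (0:ℝ) 1) := by
    refine ⟨M ^ α⁻¹, ?_⟩
    rintro x ⟨s, hs, rfl⟩
    exact hgb s hs
  set G : ℝ := sSup (g '' Icc (0:ℝ) 1) with hGdef
  have hGub : ∀ s ∈ Icc (0:ℝ) 1, g s ≤ G := fun s hs => le_csSup hGimg_bdd ⟨s, hs, rfl⟩
  have hGnn : 0 ≤ G := le_trans (hgnn 0 ⟨le_rfl, zero_le_one⟩) (hGub 0 ⟨le_rfl, zero_le_one⟩)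
  set C : ℝ := (L0 + L1 * G ^ α) * r with hCdef
  have hCnn : 0 ≤ C := by
    have := Real.rpow_nonneg hGnn α
    positivity
  -- the key pairwise step estimate along the segment
  have hpair : ∀ s t D : ℝ, s ∈ Icc (0:ℝ) 1 → t ∈ Icc (0:ℝ) 1 → s ≤ t → 0 ≤ D →
      (∀ u, u ∈ Icc s t → g u ≤ D) →
      ‖F ((1 - t) • θ + t • θ') - F ((1 - s) • θ + s • θ')‖
        ≤ (L0 + L1 * D ^ α) * (r * (t - s)) := by
    intro s t D hs ht hst hD hbound
    have hkey := hsym ((1 - t) • θ + t • θ') ((1 - s) • θ + s • θ')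
    have hsup_le : sSup ((fun γ : ℝ =>
        ‖F (γ • ((1 - t) • θ + t • θ') + (1 - γ) • ((1 - s) • θ + s • θ'))‖ ^ α) '' Icc 0 1)
        ≤ D ^ α := by
      apply Real.sSup_le _ (Real.rpow_nonneg hD α)
      rintro x ⟨γ, hγ, rfl⟩
      simp only
      rw [hcomb γ t s]
      have hu : γ * t + (1 - γ) * s ∈ Icc s t :=
        ⟨by nlinarith [hγ.1, hγ.2], by nlinarith [hγ.1, hγ.2]⟩
      have huI : γ * t + (1 - γ) * s ∈ Icc (0:ℝ) 1 :=
        ⟨le_trans hs.1 hu.1, le_trans hu.2 ht.2⟩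
      exact Real.rpow_le_rpow (hgnn _ huI) (hbound _ hu) hα0.le
    have hdist' : ‖((1 - t) • θ + t • θ') - ((1 - s) • θ + s • θ')‖ = (t - s) * r := by
      rw [hdist s t, abs_of_nonneg (by linarith)]
    calc ‖F ((1 - t) • θ + t • θ') - F ((1 - s) • θ + s • θ')‖
        ≤ (L0 + L1 * sSup ((fun γ : ℝ =>
            ‖F (γ • ((1 - t) • θ + t • θ') + (1 - γ) • ((1 - s) • θ + s • θ'))‖ ^ α) '' Icc 0 1))
          * ‖((1 - t) • θ + t • θ') - ((1 - s) • θ + s • θ')‖ := hkey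
      _ ≤ (L0 + L1 * D ^ α) * (r * (t - s)) := by
          rw [hdist']
          have h1 : L0 + L1 * sSup ((fun γ : ℝ =>
              ‖F (γ • ((1 - t) • θ + t • θ') + (1 - γ) • ((1 - s) • θ + s • θ'))‖ ^ α) '' Icc 0 1)
              ≤ L0 + L1 * D ^ α :=
            add_le_add_right (mul_le_mul_of_nonneg_left hsup_le hL1) L0
          have h2 : (t - s) * r = r * (t - s) := by ring
          rw [h2]
          apply mul_le_mul_of_nonneg_right h1 (by nlinarith)
  -- Lipschitz property of g
  have hlip : ∀ s ∈ Icc (0:ℝ) 1, ∀ t ∈ Icc (0:ℝ) 1, s ≤ t → |g t - g s| ≤ C * (t - s) := by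
    intro s hs t ht hst
    have h1 := hpair s t G hs ht hst hGnn (fun u hu => hGub u ⟨le_trans hs.1 hu.1, le_trans hu.2 ht.2⟩)
    have h2 : |g t - g s| ≤ ‖F ((1 - t) • θ + t • θ') - F ((1 - s) • θ + s • θ')‖ :=
      abs_norm_sub_norm_le _ _
    have h3 : (L0 + L1 * G ^ α) * (r * (t - s)) = C * (t - s) := by rw [hCdef]; ring
    linarith
  -- one-sided step estimate with a local bound on g
  have hstep : ∀ s ∈ Icc (0:ℝ) 1, ∀ t ∈ Icc (0:ℝ) 1, s ≤ t →
      g t - g s ≤ (L0 + L1 * (g s + C * (t - s)) ^ α) * (r * (t - s)) := by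
    intro s hs t ht hst
    have hb : ∀ u, u ∈ Icc s t → g u ≤ g s + C * (t - s) := by
      intro u hu
      have huI : u ∈ Icc (0:ℝ) 1 := ⟨le_trans hs.1 hu.1, le_trans hu.2 ht.2⟩
      have h1 := hlip s hs u huI hu.1
      have h2 : g u - g s ≤ C * (u - s) := le_trans (le_abs_self _) h1
      have h3 : C * (u - s) ≤ C * (t - s) := mul_le_mul_of_nonneg_left (by linarith [hu.2]) hCnn
      linarith
    have hD : 0 ≤ g s + C * (t - s) := by
      have h4 := hgnn s hs
      have h5 : 0 ≤ C * (t - s) := mul_nonneg hCnn (by linarith)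
      linarith
    have h1 := hpair s t (g s + C * (t - s)) hs ht hst hD hb
    have h2 : g t - g s ≤ ‖F ((1 - t) • θ + t • θ') - F ((1 - s) • θ + s • θ')‖ :=
      le_trans (le_abs_self _) (abs_norm_sub_norm_le _ _)
    linarith
  -- the ξ constant
  set ξ : ℝ := (L0 / L1) ^ α⁻¹ with hξdef
  have hξnn : 0 ≤ ξ := Real.rpow_nonneg (div_nonneg hL0 hL1pos.le) _
  have hξα : L1 * ξ ^ α = L0 := by
    rw [hξdef, ← Real.rpow_mul (div_nonneg hL0 hL1pos.le), inv_mul_cancel₀ hα0.ne',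
      Real.rpow_one, mul_div_cancel₀ _ hL1pos.ne']
  -- the ε-perturbed bound
  have hεbound : ∀ ε : ℝ, ε ∈ Ioi (0:ℝ) → ‖F θ - F θ'‖
      ≤ (L0 + L1 * ((((‖F θ‖ + ε + ξ) ^ (1 - α)
          + (1 - α) * ((2:ℝ) ^ (1 - α) * (L1 + ε) * r)) ^ (1 - α)⁻¹ - ξ)) ^ α) * r := by
    intro ε hε
    rw [mem_Ioi] at hε
    have hgr := my_gronwall g r L0 L1 α C ‖F θ‖ ξ ε hα0 hα1 hr hL0 hL1 hε hξnn hξα hCnn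
      (le_of_eq hg0) hFnn hgnn hlip hstep
    set U : ℝ := ((‖F θ‖ + ε + ξ) ^ (1 - α)
        + (1 - α) * ((2:ℝ) ^ (1 - α) * (L1 + ε) * r)) ^ (1 - α)⁻¹ - ξ with hUdef
    have hUnn : 0 ≤ U := le_trans (hgnn 0 ⟨le_rfl, zero_le_one⟩) (hgr 0 ⟨le_rfl, zero_le_one⟩)
    have hsup : sSup ((fun γ : ℝ => ‖F (γ • θ + (1 - γ) • θ')‖ ^ α) '' Set.Icc 0 1) ≤ U ^ α := by
      apply Real.sSup_le _ (Real.rpow_nonneg hUnn α)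
      rintro x ⟨γ, hγ, rfl⟩
      have hsI : (1:ℝ) - γ ∈ Icc (0:ℝ) 1 := ⟨by linarith [hγ.2], by linarith [hγ.1]⟩
      have hx : ‖F (γ • θ + (1 - γ) • θ')‖ = g (1 - γ) := by
        have h1 : (1:ℝ) - (1 - γ) = γ := by ring
        simp only [hg, h1]
      simp only
      rw [hx]
      exact Real.rpow_le_rpow (hgnn _ hsI) (hgr _ hsI) hα0.le
    calc ‖F θ - F θ'‖
        ≤ (L0 + L1 * sSup ((fun γ : ℝ => ‖F (γ • θ + (1 - γ) • θ')‖ ^ α) '' Set.Icc 0 1)) * r :=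
          key
      _ ≤ (L0 + L1 * U ^ α) * r := by
          apply mul_le_mul_of_nonneg_right _ hrnn
          exact add_le_add_right (mul_le_mul_of_nonneg_left hsup hL1) L0
  -- pass to the limit ε → 0⁺
  set Ψ : ℝ → ℝ := fun ε => (L0 + L1 * ((((‖F θ‖ + ε + ξ) ^ (1 - α)
      + (1 - α) * ((2:ℝ) ^ (1 - α) * (L1 + ε) * r)) ^ (1 - α)⁻¹ - ξ)) ^ α) * r with hΨdef
  have hΨcont : ContinuousAt Ψ 0 := by
    apply Continuous.continuousAt
    rw [hΨdef]
    apply Continuous.mul _ continuous_const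
    apply Continuous.add continuous_const
    apply Continuous.mul continuous_const
    apply (Real.continuous_rpow_const hα0.le).comp
    apply Continuous.sub _ continuous_const
    apply (Real.continuous_rpow_const (by positivity)).comp
    apply Continuous.add
    · apply (Real.continuous_rpow_const h1α.le).comp
      fun_prop
    · fun_prop
  have hev : ∀ᶠ ε in 𝓝[>] (0:ℝ), ‖F θ - F θ'‖ ≤ Ψ ε :=
    eventually_nhdsWithin_of_forall hεbound
  have hlim : Tendsto Ψ (𝓝[>] (0:ℝ)) (𝓝 (Ψ 0)) :=
    hΨcont.continuousWithinAt.tendsto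
  have hfin : ‖F θ - F θ'‖ ≤ Ψ 0 := ge_of_tendsto hlim hev
  -- final algebra
  have hΨ0 : Ψ 0 = (L0 + L1 * ((((‖F θ‖ + ξ) ^ (1 - α)
      + (1 - α) * ((2:ℝ) ^ (1 - α) * L1 * r)) ^ (1 - α)⁻¹ - ξ)) ^ α) * r := by
    rw [hΨdef]
    norm_num
  rw [hΨ0] at hfin
  refine hfin.trans ?_
  rw [hξdef]
  exact my_final_algebra L0 L1 α ‖F θ‖ r hα0 hα1 hL0 hL1pos hFnn hrnn
end
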